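/- The linear map φ from the complexified Diamond Lie algebra to sl(3,ℂ) defined on the basis by φ(P+) = E1 (elementary matrix E_{12}), φ(P-) = F12 (elementary matrix E_{31}), φ(J) = (i/3)(2H1 + H2) where H1 = E_{11} - E_{22} and H2 = E_{22} - E_{33}, and φ(T) = (i/2)F2 with F2 = E_{32}, is an injective Lie algebra homomorphism. -/

import Mathlib

open Matrix

/-- Bracket of the complexified Diamond Lie algebra in the basis `{J, P+, P-, T}`
(coordinates indexed `0,1,2,3`): `[J,P+]=iP+`, `[J,P-]=-iP-`, `[P+,P-]=2iT`. -/
def diamondBracket (u v : Fin 4 → ℂ) : Fin 4 → ℂ :=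
  ![0, Complex.I * (u 0 * v 1 - u 1 * v 0), -Complex.I * (u 0 * v 2 - u 2 * v 0),
    2 * Complex.I * (u 1 * v 2 - u 2 * v 1)]

/-- `H1 = E₁₁ - E₂₂`. -/
def H1 : Matrix (Fin 3) (Fin 3) ℂ := single 0 0 1 - single 1 1 1
/-- `H2 = E₂₂ - E₃₃`. -/
def H2 : Matrix (Fin 3) (Fin 3) ℂ := single 1 1 1 - single 2 2 1

/-- The map `φ` with `φ(J) = (i/3)(2H1+H2)`, `φ(P+) = E₁₂`, `φ(P-) = E₃₁`,
`φ(T) = (i/2)E₃₂`, extended linearly. -/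
noncomputable def phiMap (u : Fin 4 → ℂ) : Matrix (Fin 3) (Fin 3) ℂ :=
  u 0 • ((Complex.I / 3) • ((2 : ℂ) • H1 + H2)) + u 1 • single 0 1 1
    + u 2 • single 2 0 1 + u 3 • ((Complex.I / 2) • single 2 1 1)

lemma phiMap_eq (u : Fin 4 → ℂ) :
    phiMap u = !![u 0 * (2 * Complex.I / 3), u 1, 0;
                  0, u 0 * (-Complex.I / 3), 0;
                  u 2, u 3 * (Complex.I / 2), u 0 * (-Complex.I / 3)] := by
  ext i j
  fin_cases i <;> fin_cases j <;>
    simp [phiMap, H1, H2, Matrix.single_apply, Matrix.add_apply, Matrix.smul_apply] <;> ring_nf <;> simp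

set_option maxHeartbeats 2000000 in
/-- `φ` is an injective Lie algebra homomorphism of the complexified Diamond Lie algebra
into `sl(3,ℂ)` (traceless matrices with the commutator bracket). -/
theorem phi_injective_hom_into_sl3 :
    Function.Injective phiMap ∧
    (∀ u : Fin 4 → ℂ, (phiMap u).trace = 0) ∧
    (∀ u v : Fin 4 → ℂ,
      phiMap (diamondBracket u v) = phiMap u * phiMap v - phiMap v * phiMap u) := by
  refine ⟨?_, ?_, ?_⟩
  · intro u v h
    rw [phiMap_eq, phiMap_eq] at h
    funext k
    have h00 := congrFun (congrFun h 0) 0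
    have h01 := congrFun (congrFun h 0) 1
    have h20 := congrFun (congrFun h 2) 0
    have h21 := congrFun (congrFun h 2) 1
    simp only [Matrix.of_apply, Matrix.cons_val', Matrix.cons_val_zero, Matrix.cons_val_one, Matrix.head_cons,
      Matrix.empty_val', Matrix.cons_val_fin_one, Matrix.head_fin_const] at h00 h01 h20 h21
    fin_cases k
    · have : (2 * Complex.I / 3 : ℂ) ≠ 0 := by
        simp [Complex.I_ne_zero, div_eq_zero_iff]
      exact mul_right_cancel₀ this h00
    · exact h01
    · exact h20
    · have : (Complex.I / 2 : ℂ) ≠ 0 := by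
        simp [Complex.I_ne_zero, div_eq_zero_iff]
      exact mul_right_cancel₀ this h21
  · intro u
    rw [phiMap_eq]
    simp [Matrix.trace_fin_three]
    ring
  · intro u v
    rw [phiMap_eq, phiMap_eq, phiMap_eq]
    ext i j
    fin_cases i <;> fin_cases j <;>
      simp [diamondBracket, Matrix.mul_fin_three, Matrix.sub_apply,
        Matrix.vecHead, Matrix.vecTail] <;>
      (try ring_nf) <;> (try simp [Complex.I_sq]) <;> (try ring)
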